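/- (Asymptotic equivalence of the HC objective and the proxy separation at the optimal threshold.) In the ARW model with parameters 1/2 < β < 1 and ρ*(β) < r < 1, let W(t) = (Ḡ(t) − Ψ̄(t))/√(G(t)·Ḡ(t)) with G(t) = (1−ε_p)(Φ(t)−Φ(−t)) + ε_p(Φ(t−τ_p)−Φ(−t−τ_p)) and Ḡ = 1 − G. Then at t = t_p(q*(r,β)), W(t) · √(TPR(t)+FPR(t)) / TPR(t) → 1 as p → ∞, where TPR and FPR are computed with ε = ε_p, τ = τ_p. -/

import Mathlib

open Filter Set MeasureTheory

noncomputable def gaussPDF (t : ℝ) : ℝ := (Real.sqrt (2 * Real.pi))⁻¹ * Real.exp (-(t ^ 2) / 2)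

/-- standard normal CDF Φ -/
noncomputable def normCDF (t : ℝ) : ℝ := ∫ x in Set.Iic t, gaussPDF x

/-- survival function of |N(τ,1)| -/
noncomputable def psiBar (τ t : ℝ) : ℝ := (1 - normCDF (t - τ)) + normCDF (-t - τ)

noncomputable def tprFn (ε τ t : ℝ) : ℝ := ε * psiBar τ t

noncomputable def fprFn (ε t : ℝ) : ℝ := (1 - ε) * psiBar 0 t

noncomputable def idrFn (ε τ t : ℝ) : ℝ := ε * normCDF (-t - τ)

/-- clipping proxy separation -/
noncomputable def sepFn (ε τ t : ℝ) : ℝ :=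
  2 * τ * (tprFn ε τ t - 2 * idrFn ε τ t) / Real.sqrt (tprFn ε τ t + fprFn ε t)

/-- proxy false discovery rate -/
noncomputable def fdrFn (ε τ t : ℝ) : ℝ := fprFn ε t / (tprFn ε τ t + fprFn ε t)

/-- magnitude of derivative of TPR -/
noncomputable def tprD (ε τ t : ℝ) : ℝ := ε * (gaussPDF (t - τ) + gaussPDF (t + τ))

/-- magnitude of derivative of FPR -/
noncomputable def fprD (ε t : ℝ) : ℝ := 2 * (1 - ε) * gaussPDF t

/-- proxy local false discovery rate -/
noncomputable def lfdrFn (ε τ t : ℝ) : ℝ := fprD ε t / (tprD ε τ t + fprD ε t)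

noncomputable def rhoStar (β : ℝ) : ℝ :=
  if β ≤ 1 / 2 then 0 else if β ≤ 3 / 4 then β - 1 / 2 else (1 - Real.sqrt (1 - β)) ^ 2

noncomputable def qStar (r β : ℝ) : ℝ := if r ≤ β / 3 then 4 * r else (β + r) ^ 2 / (4 * r)

/-- sparsity ε_p = p^{-β} in the ARW model -/
noncomputable def epsP (β : ℝ) (p : ℕ) : ℝ := (p : ℝ) ^ (-β)

/-- strength τ_p = √(2 r log p) in the ARW model -/
noncomputable def tauP (r : ℝ) (p : ℕ) : ℝ := Real.sqrt (2 * r * Real.log p)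

/-- threshold t_p(q) = √(2 q log p) -/
noncomputable def tP (q : ℝ) (p : ℕ) : ℝ := Real.sqrt (2 * q * Real.log p)

/-- folded two-point mixture G_{ε,τ} -/
noncomputable def gMix (ε τ t : ℝ) : ℝ :=
  (1 - ε) * (normCDF t - normCDF (-t)) + ε * (normCDF (t - τ) - normCDF (-t - τ))

/-- ideal HC objective -/
noncomputable def hcObj (ε τ t : ℝ) : ℝ :=
  ((1 - gMix ε τ t) - psiBar 0 t) / Real.sqrt (gMix ε τ t * (1 - gMix ε τ t))

/-- useful feature discovery exponent δ(q) -/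
noncomputable def deltaExp (β r q : ℝ) : ℝ :=
  if q ≤ r then 1 - β else 1 - β - (Real.sqrt q - Real.sqrt r) ^ 2

/-- separation growth exponent γ(q) -/
noncomputable def gammaExp (β r q : ℝ) : ℝ :=
  deltaExp β r q - max (1 - q) (deltaExp β r q) / 2

/-!
Since `1 - G = TPR + FPR` and `Ḡ - Ψ̄ = ε (Ψ̄_τ - Ψ̄)`, the quantity equals
`(1 - Ψ̄(t) / Ψ̄_τ(t)) / √G(t)` exactly, and `G → 1` because `ε_p → 0` and `t_p → ∞`.
For the ratio, the Mills bound `Ψ̄(t) ≤ 2 φ(t) / t` and the crude bound `Ψ̄_τ(t) ≥ φ(|t - τ| + 1)`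
give `Ψ̄(t) / Ψ̄_τ(t) ≤ 2 exp (((|t - τ| + 1)² - t²) / 2)`. With `t = a √(log p)` and
`τ = b √(log p)` the exponent is `-b (2a - b) / 2 · log p + O(√(log p))`, which tends to `-∞`
because `q*(r, β) > r / 4`, i.e. `b < 2a`.
-/

open Real Topology ProbabilityTheory

theorem gaussPDF_eq_gaussianPDFReal : gaussPDF = gaussianPDFReal 0 1 := by
  ext t
  simp [gaussPDF, gaussianPDFReal]

theorem gaussPDF_pos (t : ℝ) : 0 < gaussPDF t := by
  unfold gaussPDF
  positivity

theorem integrable_gaussPDF : Integrable gaussPDF := by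
  rw [gaussPDF_eq_gaussianPDFReal]
  exact integrable_gaussianPDFReal 0 1

theorem integral_gaussPDF : ∫ x, gaussPDF x = 1 := by
  rw [gaussPDF_eq_gaussianPDFReal]
  exact integral_gaussianPDFReal_eq_one 0 one_ne_zero

theorem gaussPDF_le_of_le {a b : ℝ} (ha : 0 ≤ a) (hab : a ≤ b) : gaussPDF b ≤ gaussPDF a := by
  unfold gaussPDF
  gcongr

theorem gaussPDF_div_gaussPDF (a b : ℝ) : gaussPDF a / gaussPDF b = exp ((b ^ 2 - a ^ 2) / 2) := by
  unfold gaussPDF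
  rw [mul_div_mul_left _ _ (by positivity), ← exp_sub]
  ring_nf

theorem hasDerivAt_gaussPDF (x : ℝ) : HasDerivAt gaussPDF (-(x * gaussPDF x)) x := by
  have h : HasDerivAt (fun y : ℝ => -(y ^ 2) / 2) (-x) x :=
    ((hasDerivAt_pow 2 x).neg.div_const 2).congr_deriv (by norm_num; ring)
  exact (h.exp.const_mul (√(2 * π))⁻¹).congr_deriv (by simp only [gaussPDF]; ring)

theorem tendsto_gaussPDF_atTop : Tendsto gaussPDF atTop (𝓝 0) := by
  have h : Tendsto (fun t : ℝ => -(t ^ 2) / 2) atTop atBot :=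
    (tendsto_neg_atTop_atBot.comp (tendsto_pow_atTop two_ne_zero)).atBot_div_const two_pos
  have h' := (tendsto_exp_atBot.comp h).const_mul (√(2 * π))⁻¹
  rw [mul_zero] at h'
  exact h'

theorem normCDF_nonneg (t : ℝ) : 0 ≤ normCDF t :=
  setIntegral_nonneg measurableSet_Iic fun x _ => (gaussPDF_pos x).le

theorem one_sub_normCDF (t : ℝ) : 1 - normCDF t = ∫ x in Ioi t, gaussPDF x := by
  have h := intervalIntegral.integral_Iic_add_Ioi (b := t) integrable_gaussPDF.integrableOn
    integrable_gaussPDF.integrableOn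
  rw [integral_gaussPDF] at h
  rw [normCDF, ← h, add_sub_cancel_left]

theorem normCDF_neg (t : ℝ) : normCDF (-t) = ∫ x in Ioi t, gaussPDF x := by
  rw [normCDF, ← integral_comp_neg_Ioi]
  simp [gaussPDF]

theorem normCDF_le_one (t : ℝ) : normCDF t ≤ 1 := by
  have := one_sub_normCDF t
  have : 0 ≤ ∫ x in Ioi t, gaussPDF x :=
    setIntegral_nonneg measurableSet_Ioi fun x _ => (gaussPDF_pos x).le
  linarith

theorem integrable_mul_gaussPDF : Integrable fun x => x * gaussPDF x := by
  convert (integrable_mul_exp_neg_mul_sq (b := 1 / 2) (by norm_num)).const_mul (√(2 * π))⁻¹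
    using 2 with x
  simp only [gaussPDF]
  ring_nf

theorem integral_Ioi_mul_gaussPDF (t : ℝ) : ∫ x in Ioi t, x * gaussPDF x = gaussPDF t := by
  rw [integral_Ioi_of_hasDerivAt_of_tendsto' (f := -gaussPDF) (m := -0)
    (fun x _ => by simpa using (hasDerivAt_gaussPDF x).neg) integrable_mul_gaussPDF.integrableOn
    tendsto_gaussPDF_atTop.neg]
  simp

theorem integral_Ioi_gaussPDF_le {t : ℝ} (ht : 0 < t) :
    ∫ x in Ioi t, gaussPDF x ≤ gaussPDF t / t := by
  rw [← integral_Ioi_mul_gaussPDF, div_eq_inv_mul, ← integral_const_mul]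
  refine setIntegral_mono_on integrable_gaussPDF.integrableOn
    (integrable_mul_gaussPDF.const_mul _).integrableOn measurableSet_Ioi fun x hx => ?_
  rw [← mul_assoc, le_mul_iff_one_le_left (gaussPDF_pos x), ← div_eq_inv_mul, one_le_div ht]
  exact le_of_lt hx

theorem gaussPDF_abs_add_one_le_integral_Ioi (x : ℝ) :
    gaussPDF (|x| + 1) ≤ ∫ y in Ioi x, gaussPDF y :=
  calc gaussPDF (|x| + 1) = gaussPDF (|x| + 1) * volume.real (Ioc |x| (|x| + 1)) := by simp
    _ ≤ ∫ y in Ioc |x| (|x| + 1), gaussPDF y :=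
        setIntegral_ge_of_const_le_real measurableSet_Ioc measure_Ioc_lt_top.ne
          (fun y hy => gaussPDF_le_of_le ((abs_nonneg x).trans hy.1.le) hy.2)
          integrable_gaussPDF.integrableOn
    _ ≤ ∫ y in Ioi x, gaussPDF y :=
        setIntegral_mono_set integrable_gaussPDF.integrableOn
          (.of_forall fun y => (gaussPDF_pos y).le)
          (Ioc_subset_Ioi_self.trans (Ioi_subset_Ioi (le_abs_self x))).eventuallyLE

theorem psiBar_nonneg (τ t : ℝ) : 0 ≤ psiBar τ t := by
  have := normCDF_le_one (t - τ)
  have := normCDF_nonneg (-t - τ)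
  unfold psiBar
  linarith

theorem psiBar_le_two (τ t : ℝ) : psiBar τ t ≤ 2 := by
  have := normCDF_nonneg (t - τ)
  have := normCDF_le_one (-t - τ)
  unfold psiBar
  linarith

theorem psiBar_zero_eq (t : ℝ) : psiBar 0 t = 2 * ∫ x in Ioi t, gaussPDF x := by
  simp only [psiBar, sub_zero, one_sub_normCDF, normCDF_neg]
  exact (two_mul _).symm

theorem psiBar_zero_le {t : ℝ} (ht : 0 < t) : psiBar 0 t ≤ 2 * (gaussPDF t / t) := by
  rw [psiBar_zero_eq]
  gcongr
  exact integral_Ioi_gaussPDF_le ht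

theorem gaussPDF_abs_add_one_le_psiBar (τ t : ℝ) : gaussPDF (|t - τ| + 1) ≤ psiBar τ t := by
  have := gaussPDF_abs_add_one_le_integral_Ioi (t - τ)
  have := normCDF_nonneg (-t - τ)
  rw [psiBar, one_sub_normCDF]
  linarith

theorem psiBar_pos (τ t : ℝ) : 0 < psiBar τ t :=
  (gaussPDF_pos _).trans_le (gaussPDF_abs_add_one_le_psiBar τ t)

theorem tendsto_psiBar_zero_atTop : Tendsto (psiBar 0) atTop (𝓝 0) := by
  refine squeeze_zero' (.of_forall (psiBar_nonneg 0)) ((eventually_gt_atTop 0).mono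
    fun t ht => psiBar_zero_le ht) ?_
  simpa using (tendsto_gaussPDF_atTop.div_atTop tendsto_id).const_mul 2

theorem psiBar_zero_div_psiBar_le {τ t : ℝ} (ht : 1 ≤ t) :
    psiBar 0 t / psiBar τ t ≤ 2 * exp (((|t - τ| + 1) ^ 2 - t ^ 2) / 2) :=
  calc psiBar 0 t / psiBar τ t ≤ 2 * (gaussPDF t / t) / gaussPDF (|t - τ| + 1) :=
        div_le_div₀ (by have := gaussPDF_pos t; positivity) (psiBar_zero_le (by linarith))
          (gaussPDF_pos _) (gaussPDF_abs_add_one_le_psiBar τ t)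
    _ ≤ 2 * gaussPDF t / gaussPDF (|t - τ| + 1) := by
        gcongr
        · exact (gaussPDF_pos _).le
        · exact div_le_self (gaussPDF_pos t).le ht
    _ = 2 * exp (((|t - τ| + 1) ^ 2 - t ^ 2) / 2) := by
        rw [mul_div_assoc, gaussPDF_div_gaussPDF]

theorem tendsto_psiBar_zero_div_psiBar {a b : ℝ} (ha : 0 < a) (hb : 0 < b) (hba : b < 2 * a) :
    Tendsto (fun s => psiBar 0 (a * s) / psiBar (b * s) (a * s)) atTop (𝓝 0) := by
  set k := b * (2 * a - b) / 2 with hk_def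
  have hk : 0 < k := by
    have : 0 < 2 * a - b := by linarith
    positivity
  have hexp : Tendsto (fun s => s * (|a - b| + -k * s) + 1 / 2) atTop atBot :=
    tendsto_atBot_add_const_right _ _ (tendsto_id.atTop_mul_atBot₀
      (tendsto_atBot_add_const_left _ _ (tendsto_id.const_mul_atTop_of_neg (neg_lt_zero.2 hk))))
  refine squeeze_zero' (.of_forall fun s => div_nonneg (psiBar_nonneg _ _) (psiBar_pos _ _).le)
    ((eventually_ge_atTop a⁻¹).mono fun s hs => ?_)
    (by simpa using (tendsto_exp_atBot.comp hexp).const_mul 2)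
  have hs0 : 0 ≤ s := (inv_nonneg.2 ha.le).trans hs
  refine (psiBar_zero_div_psiBar_le ((inv_le_iff_one_le_mul₀' ha).1 hs)).trans_eq ?_
  rw [← sub_mul, abs_mul, abs_of_nonneg hs0, add_sq, mul_pow, sq_abs]
  congr 2
  rw [hk_def]
  ring

theorem one_sub_gMix (ε τ t : ℝ) : 1 - gMix ε τ t = tprFn ε τ t + fprFn ε t := by
  simp only [gMix, tprFn, fprFn, psiBar, sub_zero]
  ring

theorem tendsto_gMix_one {ι : Type*} {l : Filter ι} {ε τ t : ι → ℝ}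
    (hε : Tendsto ε l (𝓝 0)) (ht : Tendsto t l atTop) :
    Tendsto (fun n => gMix (ε n) (τ n) (t n)) l (𝓝 1) := by
  have htpr : Tendsto (fun n => tprFn (ε n) (τ n) (t n)) l (𝓝 0) :=
    hε.zero_mul_isBoundedUnder_le (isBoundedUnder_of ⟨2, fun n => by
      simpa [abs_of_nonneg (psiBar_nonneg _ _)] using psiBar_le_two (τ n) (t n)⟩)
  have hfpr : Tendsto (fun n => fprFn (ε n) (t n)) l (𝓝 0) := by
    simpa [fprFn] using (tendsto_const_nhds.sub hε).mul (tendsto_psiBar_zero_atTop.comp ht)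
  have h := (tendsto_const_nhds (x := (1 : ℝ))).sub (htpr.add hfpr)
  rw [add_zero, sub_zero] at h
  refine h.congr fun n => ?_
  rw [← one_sub_gMix, sub_sub_cancel]

theorem hcObj_mul_sqrt_div_tprFn {ε τ t : ℝ} (hε : 0 < ε) (hε1 : ε ≤ 1)
    (hG : 0 < gMix ε τ t) :
    hcObj ε τ t * √(tprFn ε τ t + fprFn ε t) / tprFn ε τ t
      = (1 - psiBar 0 t / psiBar τ t) / √(gMix ε τ t) := by
  have hτ := psiBar_pos τ t
  have hfpr : 0 ≤ fprFn ε t := mul_nonneg (sub_nonneg.2 hε1) (psiBar_nonneg 0 t)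
  have hsum : 0 < tprFn ε τ t + fprFn ε t := by
    have : 0 < tprFn ε τ t := mul_pos hε hτ
    linarith
  have hnum : 1 - gMix ε τ t - psiBar 0 t = ε * psiBar τ t - ε * psiBar 0 t := by
    rw [one_sub_gMix, tprFn, fprFn]
    ring
  rw [hcObj, hnum, one_sub_gMix, sqrt_mul hG.le, tprFn]
  have := sqrt_pos.2 hG
  have := sqrt_pos.2 hsum
  field_simp

theorem rhoStar_nonneg (β : ℝ) : 0 ≤ rhoStar β := by
  unfold rhoStar
  split_ifs
  · exact le_rfl
  · linarith
  · positivity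

theorem lt_four_mul_qStar {r β : ℝ} (hr : 0 < r) (hβ : 0 < β) : r < 4 * qStar r β := by
  unfold qStar
  split_ifs
  · linarith
  · rw [mul_div_assoc', lt_div_iff₀ (by positivity)]
    nlinarith

theorem tP_eq_mul {q : ℝ} (hq : 0 ≤ q) (p : ℕ) : tP q p = √(2 * q) * √(log p) :=
  sqrt_mul (by positivity) _

theorem tendsto_epsP {β : ℝ} (hβ : 0 < β) : Tendsto (epsP β) atTop (𝓝 0) :=
  (tendsto_rpow_neg_atTop hβ).comp tendsto_natCast_atTop_atTop

theorem tendsto_sqrt_log_atTop : Tendsto (fun p : ℕ => √(log p)) atTop atTop :=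
  tendsto_sqrt_atTop.comp (tendsto_log_atTop.comp tendsto_natCast_atTop_atTop)

theorem epsP_mem_Ioo {β : ℝ} (hβ : 0 < β) {p : ℕ} (hp : 2 ≤ p) : epsP β p ∈ Ioo 0 1 := by
  have hp1 : (1 : ℝ) < p := by exact_mod_cast hp
  exact ⟨rpow_pos_of_pos (by linarith) _, rpow_lt_one_of_one_lt_of_neg hp1 (neg_lt_zero.2 hβ)⟩

theorem stmt7_general (β r : ℝ) (hβ1 : 1 / 2 < β)
    (hr1 : rhoStar β < r) :
    Filter.Tendsto
      (fun p : ℕ =>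
        hcObj (epsP β p) (tauP r p) (tP (qStar r β) p) *
            Real.sqrt (tprFn (epsP β p) (tauP r p) (tP (qStar r β) p)
              + fprFn (epsP β p) (tP (qStar r β) p)) /
          tprFn (epsP β p) (tauP r p) (tP (qStar r β) p))
      Filter.atTop (nhds 1) := by
  have hβ : 0 < β := by linarith
  have hr : 0 < r := (rhoStar_nonneg β).trans_lt hr1
  set q := qStar r β
  have hrq := lt_four_mul_qStar hr hβ
  have hq : 0 < q := by linarith
  have ht : ∀ p : ℕ, tP q p = √(2 * q) * √(log p) := tP_eq_mul hq.le
  have hτ : ∀ p : ℕ, tauP r p = √(2 * r) * √(log p) := tP_eq_mul hr.le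
  have hratio : Tendsto (fun p : ℕ => psiBar 0 (tP q p) / psiBar (tauP r p) (tP q p))
      atTop (𝓝 0) := by
    simp only [ht, hτ]
    refine (tendsto_psiBar_zero_div_psiBar (sqrt_pos.2 (by positivity))
      (sqrt_pos.2 (by positivity)) ?_).comp tendsto_sqrt_log_atTop
    rw [sqrt_lt' (by positivity), mul_pow, sq_sqrt (by positivity)]
    linarith
  have hG := tendsto_gMix_one (τ := tauP r) (tendsto_epsP hβ)
    ((tendsto_sqrt_log_atTop.const_mul_atTop (by positivity)).congr fun p => (ht p).symm)
  refine Tendsto.congr' ?_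
    (by simpa using (tendsto_const_nhds.sub hratio).div hG.sqrt (by norm_num))
  filter_upwards [eventually_ge_atTop 2, hG.eventually (eventually_gt_nhds one_pos)]
    with p hp hGp
  obtain ⟨hε, hε1⟩ := epsP_mem_Ioo hβ hp
  exact (hcObj_mul_sqrt_div_tprFn hε hε1.le hGp).symm

/-- Asymptotic equivalence of the HC objective and TPR/√(TPR+FPR) at t_p(q*). -/
theorem stmt7 (β r : ℝ) (hβ1 : 1 / 2 < β) (hβ2 : β < 1)
    (hr1 : rhoStar β < r) (hr2 : r < 1) :
    Filter.Tendsto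
      (fun p : ℕ =>
        hcObj (epsP β p) (tauP r p) (tP (qStar r β) p) *
            Real.sqrt (tprFn (epsP β p) (tauP r p) (tP (qStar r β) p)
              + fprFn (epsP β p) (tP (qStar r β) p)) /
          tprFn (epsP β p) (tauP r p) (tP (qStar r β) p))
      Filter.atTop (nhds 1) :=
  stmt7_general β r hβ1 hr1
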